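/- Let G be a partially ordered abelian group with order unit u such that (G, u) has Property (D). Define the supernatural number N(G, u) by N(G, u)(p) = sup{k ∈ ℕ : p^k ∣ u} (the supremum taken in ℕ ∪ {∞}) for each prime p. Then N(G, u) ∣ u, and every supernatural number M with M ∣ u satisfies M ∣ N(G, u). -/

import Mathlib

/-- A supernatural number: a function from the primes to `ℕ∞ = ℕ ∪ {∞}`. -/
def Supernatural : Type := Nat.Primes → ℕ∞

/-- A natural number `n ≥ 1` divides a supernatural number `N` if for every prime `p`
the `p`-adic valuation of `n` is at most `N(p)`. -/
def NatDvdSn (n : ℕ) (N : Supernatural) : Prop :=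
  ∀ p : Nat.Primes, ((n.factorization (p : ℕ) : ℕ) : ℕ∞) ≤ N p

/-- Divisibility of supernatural numbers: `M ∣ N` iff `M(p) ≤ N(p)` for all primes. -/
def SnDvd (M N : Supernatural) : Prop := ∀ p : Nat.Primes, M p ≤ N p

/-- `n ∣ u` in a partially ordered abelian group: there is `x ≥ 0` with `n • x = u`. -/
def NatDvdU {G : Type*} [AddCommGroup G] [PartialOrder G] [IsOrderedAddMonoid G] (n : ℕ) (u : G) : Prop :=
  ∃ x : G, 0 ≤ x ∧ n • x = u

/-- `N ∣ u` for a supernatural number `N`: every natural number `n ≥ 1` dividing `N`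
divides `u`. -/
def SnDvdU {G : Type*} [AddCommGroup G] [PartialOrder G] [IsOrderedAddMonoid G] (N : Supernatural) (u : G) : Prop :=
  ∀ n : ℕ, 1 ≤ n → NatDvdSn n N → NatDvdU n u

lemma natDvdU_of_dvd {G : Type*} [AddCommGroup G] [PartialOrder G] [IsOrderedAddMonoid G] {a b : ℕ} {u : G}
    (h : NatDvdU b u) (hab : a ∣ b) : NatDvdU a u := by
  obtain ⟨x, hx, hxu⟩ := h
  obtain ⟨c, rfl⟩ := hab
  exact ⟨c • x, nsmul_nonneg hx c, by rw [← mul_smul]; exact hxu⟩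

lemma enat_le_of_forall_nat_le {a b : ℕ∞} (h : ∀ k : ℕ, (k : ℕ∞) ≤ a → (k : ℕ∞) ≤ b) : a ≤ b := by
  cases a with
  | top =>
    by_contra hb
    lift b to ℕ using ne_top_of_lt (lt_of_not_ge hb)
    have := h (b + 1) le_top
    exact absurd this (by exact_mod_cast Nat.not_succ_le_self b)
  | coe n => exact h n le_rfl

/-- Suppose `(G, u)` is a partially ordered abelian group with order unit
having Property (D), and define the supernatural number `N(G, u)` by
`N(G, u)(p) = sup {k : p^k ∣ u}` (supremum in `ℕ∞`). Then `N(G, u) ∣ u`, and every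
supernatural number `M` with `M ∣ u` satisfies `M ∣ N(G, u)`. -/
theorem maximal_supernatural_divisor_spec
    {G : Type*} [AddCommGroup G] [PartialOrder G] [IsOrderedAddMonoid G]
    (u : G) (hu_pos : 0 ≤ u)
    (hu_unit : ∀ g : G, ∃ n : ℕ, -(n • u) ≤ g ∧ g ≤ n • u)
    (hD : ∀ m n : ℕ, 1 ≤ m → 1 ≤ n → Nat.Coprime m n →
        NatDvdU m u → NatDvdU n u → NatDvdU (m * n) u)
    (N : Supernatural)
    (hN : ∀ p : Nat.Primes, N p = ⨆ k ∈ {k : ℕ | NatDvdU ((p : ℕ) ^ k) u}, (k : ℕ∞)) :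
    SnDvdU N u ∧ ∀ M : Supernatural, SnDvdU M u → SnDvd M N := by
  constructor
  · intro n
    induction n using Nat.recOnPosPrimePosCoprime with
    | prime_pow p k hp hk =>
      intro _ hdvd
      have hpn : p.Prime := hp
      have hle : ((k : ℕ∞)) ≤ N ⟨p, hpn⟩ := by
        have := hdvd ⟨p, hpn⟩
        simpa [hpn.factorization_pow] using this
      replace hle := hle.trans_eq (hN ⟨p, hpn⟩)
      have h1 : ((k - 1 : ℕ) : ℕ∞) < ⨆ j ∈ {j : ℕ | NatDvdU ((p : ℕ) ^ j) u}, (j : ℕ∞) :=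
        lt_of_lt_of_le (by exact_mod_cast Nat.sub_lt hk one_pos) hle
      rw [lt_iSup_iff] at h1
      obtain ⟨j, hj⟩ := h1
      rw [lt_iSup_iff] at hj
      obtain ⟨hjS, hj⟩ := hj
      have hkj : k ≤ j := by
        have : (k : ℕ) - 1 < j := by exact_mod_cast hj
        omega
      exact natDvdU_of_dvd hjS (pow_dvd_pow p hkj)
    | zero => intro h; omega
    | one => intro _ _; exact ⟨u, hu_pos, one_smul _ _⟩
    | coprime a b ha hb hab Pa Pb =>
      intro _ hdvd
      have ha0 : a ≠ 0 := by omega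
      have hb0 : b ≠ 0 := by omega
      have hda : NatDvdSn a N := fun p => le_trans
        (by rw [Nat.factorization_mul ha0 hb0]; exact_mod_cast Nat.le_add_right _ _) (hdvd p)
      have hdb : NatDvdSn b N := fun p => le_trans
        (by rw [Nat.factorization_mul ha0 hb0]; exact_mod_cast Nat.le_add_left _ _) (hdvd p)
      exact hD a b (by omega) (by omega) hab (Pa (by omega) hda) (Pb (by omega) hdb)
  · intro M hM p
    rw [hN p]
    apply enat_le_of_forall_nat_le
    intro k hk
    have hmem : NatDvdU ((p : ℕ) ^ k) u := by
      apply hM _ (Nat.one_le_iff_ne_zero.mpr (pow_ne_zero k p.2.pos.ne'))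
      intro q
      rw [p.2.factorization_pow]
      by_cases hq : (q : ℕ) = (p : ℕ)
      · rw [hq, Finsupp.single_eq_same]
        have : q = p := Subtype.ext hq
        rwa [this]
      · rw [Finsupp.single_eq_of_ne' (Ne.symm hq)]
        exact zero_le
    exact le_iSup₂ (f := fun j (_ : j ∈ {j : ℕ | NatDvdU ((p : ℕ) ^ j) u}) => (j : ℕ∞)) k hmem
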